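/- arXiv:1802.04982 — 2 statements merged into one kernel-verified Lean document; each statement's English description precedes it below -/
import Mathlib

section
/- Let F_red and F_blue be clausal ground formulas and let T be a closed two-sided clausal ground tableau for F_red and F_blue. If N is the root of T, then (1) F_red ⊨ ipol(N) and ipol(N) ⊨ ¬F_blue, and (2) lit(ipol(N)) ⊆ lit(F_red) ∩ lit(¬F_blue). -/
namespace CTI

/-- Terms of first-order logic: variables and function applications.
Function symbols with empty argument lists play the role of constants. -/
inductive Tm : Type where
  | var : ℕ → Tm
  | fn  : ℕ → List Tm → Tm

/-- The variables occurring in a term. -/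
def Tm.vars : Tm → List ℕ
  | .var x => [x]
  | .fn _ ts => (ts.attach.map (fun t => Tm.vars t.1)).flatten
decreasing_by
  have h := List.sizeOf_lt_of_mem t.2; simp_wf; omega

/-- The function symbols occurring in a term. -/
def Tm.funs : Tm → List ℕ
  | .var _ => []
  | .fn f ts => f :: (ts.attach.map (fun t => Tm.funs t.1)).flatten
decreasing_by
  have h := List.sizeOf_lt_of_mem t.2; simp_wf; omega

/-- A term is ground iff it contains no variables. -/
def Tm.ground (t : Tm) : Prop := t.vars = []

/-- An interpretation (structure) over domain `D`. -/
structure Interp (D : Type) where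
  fn : ℕ → List D → D
  pr : ℕ → List D → Prop

/-- Evaluation of a term under an interpretation and a variable assignment. -/
def Tm.eval {D : Type} (I : Interp D) (a : ℕ → D) : Tm → D
  | .var x => a x
  | .fn f ts => I.fn f (ts.attach.map (fun t => Tm.eval I a t.1))
decreasing_by
  have h := List.sizeOf_lt_of_mem t.2; simp_wf; omega

/-- Formulas of first-order logic without equality. -/
inductive Fml : Type where
  | tru : Fml
  | fls : Fml
  | atom : ℕ → List Tm → Fml
  | neg : Fml → Fml
  | and : Fml → Fml → Fml
  | or : Fml → Fml → Fml
  | all : ℕ → Fml → Fml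
  | ex : ℕ → Fml → Fml

/-- Satisfaction of a formula under an interpretation and an assignment. -/
def Fml.holds {D : Type} (I : Interp D) : (ℕ → D) → Fml → Prop
  | _, .tru => True
  | _, .fls => False
  | a, .atom p ts => I.pr p (ts.map (Tm.eval I a))
  | a, .neg F => ¬ Fml.holds I a F
  | a, .and F G => Fml.holds I a F ∧ Fml.holds I a G
  | a, .or F G => Fml.holds I a F ∨ Fml.holds I a G
  | a, .all x F => ∀ d : D, Fml.holds I (Function.update a x d) F
  | a, .ex x F => ∃ d : D, Fml.holds I (Function.update a x d) F

/-- Semantic entailment: every structure (with nonempty domain) and assignment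
satisfying `F` satisfies `G`. -/
def Entails (F G : Fml) : Prop :=
  ∀ (D : Type) (_ : Nonempty D) (I : Interp D) (a : ℕ → D), F.holds I a → G.holds I a

/-- Semantic equivalence. -/
def EquivF (F G : Fml) : Prop := Entails F G ∧ Entails G F

/-- The atoms occurring in a formula, together with a polarity, relative to
the polarity `pol` of the context (`true` = positive). -/
def Fml.litsP : Bool → Fml → Set (Bool × ℕ × List Tm)
  | _, .tru => ∅
  | _, .fls => ∅
  | pol, .atom p ts => {(pol, p, ts)}
  | pol, .neg F => Fml.litsP (!pol) F
  | pol, .and F G => Fml.litsP pol F ∪ Fml.litsP pol G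
  | pol, .or F G => Fml.litsP pol F ∪ Fml.litsP pol G
  | pol, .all _ F => Fml.litsP pol F
  | pol, .ex _ F => Fml.litsP pol F

/-- lit(F): the set of pairs of an atom together with a polarity such that
the atom occurs in `F` with that polarity. -/
def Fml.lits (F : Fml) : Set (Bool × ℕ × List Tm) := Fml.litsP true F

/-- pred(F): predicates together with polarities of their occurrences. -/
def Fml.preds (F : Fml) : Set (Bool × ℕ) := {bp | ∃ ts, (bp.1, bp.2, ts) ∈ F.lits}

/-- The predicate symbols occurring in a formula (irrespective of polarity). -/
def Fml.predSyms (F : Fml) : Set ℕ := {p | ∃ b ts, (b, p, ts) ∈ F.lits}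

/-- fun(F): the function symbols (including constants) occurring in `F`. -/
def Fml.funs : Fml → Set ℕ
  | .tru => ∅
  | .fls => ∅
  | .atom _ ts => {f | ∃ t ∈ ts, f ∈ Tm.funs t}
  | .neg F => F.funs
  | .and F G => F.funs ∪ G.funs
  | .or F G => F.funs ∪ G.funs
  | .all _ F => F.funs
  | .ex _ F => F.funs

/-- The free variables of a formula. -/
def Fml.fv : Fml → Set ℕ
  | .tru => ∅
  | .fls => ∅
  | .atom _ ts => {x | ∃ t ∈ ts, x ∈ Tm.vars t}
  | .neg F => F.fv
  | .and F G => F.fv ∪ G.fv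
  | .or F G => F.fv ∪ G.fv
  | .all x F => F.fv \ {x}
  | .ex x F => F.fv \ {x}

/-- The variables occurring bound in a formula. -/
def Fml.bv : Fml → Set ℕ
  | .tru => ∅
  | .fls => ∅
  | .atom _ _ => ∅
  | .neg F => F.bv
  | .and F G => F.bv ∪ G.bv
  | .or F G => F.bv ∪ G.bv
  | .all x F => insert x F.bv
  | .ex x F => insert x F.bv

/-- All variables occurring in a formula (free or bound). -/
def Fml.varsSet : Fml → Set ℕ
  | .tru => ∅
  | .fls => ∅
  | .atom _ ts => {x | ∃ t ∈ ts, x ∈ Tm.vars t}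
  | .neg F => F.varsSet
  | .and F G => F.varsSet ∪ G.varsSet
  | .or F G => F.varsSet ∪ G.varsSet
  | .all x F => insert x F.varsSet
  | .ex x F => insert x F.varsSet

/-- Quantifier-free formulas. -/
def Fml.qfree : Fml → Prop
  | .tru => True
  | .fls => True
  | .atom _ _ => True
  | .neg F => F.qfree
  | .and F G => F.qfree ∧ G.qfree
  | .or F G => F.qfree ∧ G.qfree
  | .all _ _ => False
  | .ex _ _ => False

/-- Ground formulas: quantifier-free and without variables. -/
def Fml.isGround : Fml → Prop
  | .tru => True
  | .fls => True
  | .atom _ ts => ∀ t ∈ ts, Tm.vars t = []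
  | .neg F => F.isGround
  | .and F G => F.isGround ∧ G.isGround
  | .or F G => F.isGround ∧ G.isGround
  | .all _ _ => False
  | .ex _ _ => False

end CTI

namespace CTI

/-! ### Literals, clauses, clausal formulas -/

/-- A literal: a polarity (`true` = positive atom, `false` = negated atom),
a predicate symbol and an argument list. -/
abbrev Lit := Bool × ℕ × List Tm

/-- A clause: a finite disjunction of literals, as a list. -/
abbrev Clause := List Lit

/-- A clausal formula: a finite conjunction of clauses, as a list. -/
abbrev CForm := List Clause

/-- The complement of a literal. -/
def litCompl (l : Lit) : Lit := (!l.1, l.2.1, l.2.2)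

/-- The formula corresponding to a literal. -/
def litFml (l : Lit) : Fml := if l.1 then .atom l.2.1 l.2.2 else .neg (.atom l.2.1 l.2.2)

/-- The formula corresponding to a clause (disjunction of its literals). -/
def clauseFml (C : Clause) : Fml := C.foldr (fun l F => .or (litFml l) F) .fls

/-- The formula corresponding to a clausal formula (conjunction of its clauses). -/
def cformFml (cs : CForm) : Fml := cs.foldr (fun C F => .and (clauseFml C) F) .tru

def litGround (l : Lit) : Prop := ∀ t ∈ l.2.2, Tm.vars t = []
def clauseGround (C : Clause) : Prop := ∀ l ∈ C, litGround l
def cformGround (cs : CForm) : Prop := ∀ C ∈ cs, clauseGround C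

/-- The function symbols occurring in a clausal formula. -/
def cformFuns (cs : CForm) : Set ℕ := {f | ∃ C ∈ cs, ∃ l ∈ C, ∃ t ∈ l.2.2, f ∈ Tm.funs t}

/-- Application of a substitution to a term. -/
def Tm.applySub (σ : ℕ → Tm) : Tm → Tm
  | .var x => σ x
  | .fn f ts => .fn f (ts.attach.map (fun t => Tm.applySub σ t.1))
decreasing_by
  have h := List.sizeOf_lt_of_mem t.2; simp_wf; omega

/-- Application of a substitution to a literal. -/
def litSub (σ : ℕ → Tm) (l : Lit) : Lit := (l.1, l.2.1, l.2.2.map (Tm.applySub σ))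

/-- `C` is a substitution instance of the clause `D`. -/
def instClause (C D : Clause) : Prop := ∃ σ : ℕ → Tm, C = D.map (litSub σ)

/-- The subterm relation: `Subt s t` iff `s` occurs as a subterm of `t`. -/
inductive Subt : Tm → Tm → Prop
  | refl (t) : Subt t t
  | step {s u} (f : ℕ) (ts : List Tm) : u ∈ ts → Subt s u → Subt s (.fn f ts)

/-- Strict subterm relation. -/
def StrictSubt (s t : Tm) : Prop := Subt s t ∧ s ≠ t

/-- `Tm.builtFrom S C t`: `t` is a ground term built from function symbols in `S`,
where the symbols in `C` may additionally be used as constants. -/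
inductive Tm.builtFrom (S C : Set ℕ) : Tm → Prop
  | app {f : ℕ} {ts : List Tm} : f ∈ S → (∀ t ∈ ts, Tm.builtFrom S C t) →
      Tm.builtFrom S C (.fn f ts)
  | cst {c : ℕ} : c ∈ C → Tm.builtFrom S C (.fn c [])

/-! ### Clausal tableaux -/

/-- A node of a clausal tableau: a literal label, a side label
(`true` = red/left, `false` = blue/right; ignored for one-sided tableaux)
and the list of children in left-to-right order.  A whole tableau is the
list of children of the (unlabeled) root. -/
inductive Tab : Type where
  | node : Lit → Bool → List Tab → Tab

def Tab.lit : Tab → Lit | .node l _ _ => l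
def Tab.side : Tab → Bool | .node _ s _ => s
def Tab.children : Tab → List Tab | .node _ _ cs => cs

/-- The subtrees of a clausal tableau (given as list of children of the root)
together with the branch of (literal, side) pairs of their strict ancestors,
innermost first. -/
inductive OccIn (T : List Tab) : List (Lit × Bool) → Tab → Prop
  | top {t} : t ∈ T → OccIn T [] t
  | step {br l s cs c} : OccIn T br (.node l s cs) → c ∈ cs → OccIn T ((l, s) :: br) c

/-- Well-formedness of a (one-sided) clausal tableau below some node, for the
clausal formula `F`: the children of every node either are absent or their
literal labels form an instance of a clause in `F`. -/
inductive TabFor (F : CForm) : Tab → Prop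
  | mk {l s cs} : (cs = [] ∨ ∃ D ∈ F, instClause (cs.map Tab.lit) D) →
      (∀ c ∈ cs, TabFor F c) → TabFor F (.node l s cs)

/-- A clausal tableau for the clausal formula `F`. -/
def TableauFor (F : CForm) (T : List Tab) : Prop :=
  (T = [] ∨ ∃ D ∈ F, instClause (T.map Tab.lit) D) ∧ ∀ t ∈ T, TabFor F t

/-- Closedness of the subtree rooted at a node whose strict ancestors carry
the literals in `br`: every leaf has an ancestor labeled with its complement. -/
inductive ClosedFrom : List Lit → Tab → Prop
  | leaf {br : List Lit} {l s} : litCompl l ∈ br → ClosedFrom br (.node l s [])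
  | inner {br : List Lit} {l s cs} : cs ≠ [] → (∀ c ∈ cs, ClosedFrom (l :: br) c) →
      ClosedFrom br (.node l s cs)

/-- A closed clausal tableau: all leaves are closed (the root, being unlabeled,
must have children). -/
def ClosedTableau (T : List Tab) : Prop := T ≠ [] ∧ ∀ t ∈ T, ClosedFrom [] t

/-- All nodes of a subtree satisfy `P`. -/
inductive TabAll (P : Tab → Prop) : Tab → Prop
  | mk {l s cs} : P (.node l s cs) → (∀ c ∈ cs, TabAll P c) → TabAll P (.node l s cs)

/-! ### Two-sided clausal tableaux and interpolant extraction -/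

/-- Well-formedness of a two-sided clausal tableau below a node, for clausal
formulas `Fr` (side `true` = red) and `Fb` (side `false` = blue):
siblings have the same side, and the literal labels of the children of any
node form an instance of a clause of the formula of their side. -/
inductive TwoTabFor (Fr Fb : CForm) : Tab → Prop
  | mk {l s cs} :
      (cs = [] ∨ ∃ b : Bool, (∀ c ∈ cs, Tab.side c = b) ∧
        ∃ D ∈ (if b then Fr else Fb), instClause (cs.map Tab.lit) D) →
      (∀ c ∈ cs, TwoTabFor Fr Fb c) → TwoTabFor Fr Fb (.node l s cs)

/-- A two-sided clausal tableau for `Fr` and `Fb`. -/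
def TwoTableauFor (Fr Fb : CForm) (T : List Tab) : Prop :=
  (T = [] ∨ ∃ b : Bool, (∀ c ∈ T, Tab.side c = b) ∧
    ∃ D ∈ (if b then Fr else Fb), instClause (T.map Tab.lit) D)
  ∧ ∀ t ∈ T, TwoTabFor Fr Fb t

/-- Closedness, with the branch carrying side labels. -/
inductive SClosedFrom : List (Lit × Bool) → Tab → Prop
  | leaf {br : List (Lit × Bool)} {l s} : (∃ s', (litCompl l, s') ∈ br) →
      SClosedFrom br (.node l s [])
  | inner {br : List (Lit × Bool)} {l s cs} : cs ≠ [] →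
      (∀ c ∈ cs, SClosedFrom ((l, s) :: br) c) → SClosedFrom br (.node l s cs)

/-- The value of ipol at a closed leaf, determined by the side `s` of the leaf
and the side `ts` of its target, from the literal label `l`. -/
def leafIpol (s ts : Bool) (l : Lit) : Fml :=
  match s, ts with
  | true, true => .fls
  | true, false => litFml l
  | false, true => litFml (litCompl l)
  | false, false => .tru

/-- `Ipol br t H`: `H` is a value of ipol at the node `t` whose branch of strict
ancestors (with sides) is `br`, for some association of targets to closed leaves.
At a leaf, the target is an ancestor labeled with the complement of the leaf's
literal; at an inner node, ipol is the disjunction (side red) or conjunction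
(side blue) of the values at the children. -/
inductive Ipol : List (Lit × Bool) → Tab → Fml → Prop
  | leaf {br l s ts} : (litCompl l, ts) ∈ br →
      Ipol br (.node l s []) (leafIpol s ts l)
  | innerR {br l s cs Hs} : cs ≠ [] → (∀ c ∈ cs, Tab.side c = true) →
      cs.length = Hs.length →
      (∀ p ∈ List.zip cs Hs, Ipol ((l, s) :: br) p.1 p.2) →
      Ipol br (.node l s cs) (Hs.foldr .or .fls)
  | innerB {br l s cs Hs} : cs ≠ [] → (∀ c ∈ cs, Tab.side c = false) →
      cs.length = Hs.length →
      (∀ p ∈ List.zip cs Hs, Ipol ((l, s) :: br) p.1 p.2) →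
      Ipol br (.node l s cs) (Hs.foldr .and .tru)

/-- `IpolRoot T H`: `H` is a value of ipol at the root of the tableau `T`. -/
inductive IpolRoot : List Tab → Fml → Prop
  | rootR {T Hs} : T ≠ [] → (∀ t ∈ T, Tab.side t = true) →
      T.length = Hs.length → (∀ p ∈ List.zip T Hs, Ipol [] p.1 p.2) →
      IpolRoot T (Hs.foldr .or .fls)
  | rootB {T Hs} : T ≠ [] → (∀ t ∈ T, Tab.side t = false) →
      T.length = Hs.length → (∀ p ∈ List.zip T Hs, Ipol [] p.1 p.2) →
      IpolRoot T (Hs.foldr .and .tru)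

/-- branch_S(N): the conjunction of the literals with side `s` on the branch `br`. -/
def branchFml (s : Bool) (br : List (Lit × Bool)) : Fml :=
  ((br.filter (fun p => p.2 == s)).map (fun p => litFml p.1)).foldr .and .tru

end CTI

/-!
Every node `N` satisfies the invariant `IsBranchInterpolant` for the branch up to and including
`N`: `ipol(N)` follows from `F_red` and the red literals of the branch, and contradicts `F_blue`
and its blue literals. At a closed leaf this is read off the leaf and its target. Below a red
inner node, `F_red` makes some child's literal true; it joins the red branch, so that child's
value, hence the disjunction, holds, while the blue branch is the same for all children. Blue
nodes are dual, and at the root both branches are empty. Groundness makes the clause below each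
inner node a clause of `F_red` or `F_blue` itself, so every literal on a branch occurs in the
formula of its side, whence the condition on `lit`.
-/

namespace CTI

section Semantics

variable {D : Type} {I : Interp D} {a : ℕ → D}

theorem holds_foldr_or (Hs : List Fml) :
    (Hs.foldr Fml.or Fml.fls).holds I a ↔ ∃ H ∈ Hs, H.holds I a := by
  induction Hs with
  | nil => simp [Fml.holds]
  | cons H Hs ih => simp [Fml.holds, ih]

theorem holds_foldr_and (Hs : List Fml) :
    (Hs.foldr Fml.and Fml.tru).holds I a ↔ ∀ H ∈ Hs, H.holds I a := by
  induction Hs with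
  | nil => simp [Fml.holds]
  | cons H Hs ih => simp [Fml.holds, ih]

theorem holds_clauseFml (C : Clause) :
    (clauseFml C).holds I a ↔ ∃ l ∈ C, (litFml l).holds I a := by
  induction C with
  | nil => simp [clauseFml, Fml.holds]
  | cons l C ih =>
    change _ ∨ (clauseFml C).holds I a ↔ _
    simp [ih]

theorem holds_cformFml (F : CForm) :
    (cformFml F).holds I a ↔ ∀ C ∈ F, (clauseFml C).holds I a := by
  induction F with
  | nil => simp [cformFml, Fml.holds]
  | cons C F ih =>
    change _ ∧ (cformFml F).holds I a ↔ _
    simp [ih]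

theorem holds_litFml_litCompl (l : Lit) :
    (litFml (litCompl l)).holds I a ↔ ¬ (litFml l).holds I a := by
  obtain ⟨_ | _, p, ts⟩ := l <;> simp [litFml, litCompl, Fml.holds]

theorem holds_branchFml_cons {s s' : Bool} {l : Lit} {br : List (Lit × Bool)} :
    (branchFml s ((l, s') :: br)).holds I a ↔
      (s' = s → (litFml l).holds I a) ∧ (branchFml s br).holds I a := by
  by_cases h : s' = s
  · simp [branchFml, h, Fml.holds]
  · simp [branchFml, h]

theorem holds_litFml_of_mem_branchFml {s : Bool} {l : Lit} {br : List (Lit × Bool)}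
    (hl : (l, s) ∈ br) (h : (branchFml s br).holds I a) : (litFml l).holds I a := by
  induction br with
  | nil => cases hl
  | cons p br ih =>
    rw [holds_branchFml_cons] at h
    rcases List.mem_cons.mp hl with rfl | hl
    · exact h.1 rfl
    · exact ih hl h.2

end Semantics

section Literals

theorem litCompl_litCompl (l : Lit) : litCompl (litCompl l) = l := by
  simp [litCompl]

theorem mem_litsP_not (pol : Bool) (F : Fml) (x : Lit) :
    x ∈ F.litsP (!pol) ↔ litCompl x ∈ F.litsP pol := by
  induction F generalizing pol with
  | atom p ts =>
    obtain ⟨b, q, us⟩ := x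
    cases b <;> cases pol <;> simp [Fml.litsP, litCompl]
  | neg F ih => exact ih (!pol)
  | and F G ihF ihG => simp [Fml.litsP, ihF, ihG]
  | or F G ihF ihG => simp [Fml.litsP, ihF, ihG]
  | all _ F ih => exact ih pol
  | ex _ F ih => exact ih pol
  | tru | fls => simp [Fml.litsP]

theorem mem_lits_neg (F : Fml) (x : Lit) : x ∈ (Fml.neg F).lits ↔ litCompl x ∈ F.lits :=
  mem_litsP_not true F x

theorem lits_litFml (l : Lit) : (litFml l).lits = {l} := by
  obtain ⟨_ | _, p, ts⟩ := l <;> simp [litFml, Fml.lits, Fml.litsP]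

theorem mem_lits_cformFml (F : CForm) (x : Lit) :
    x ∈ (cformFml F).lits ↔ ∃ C ∈ F, x ∈ C := by
  have hC (C : Clause) : x ∈ (clauseFml C).lits ↔ x ∈ C := by
    induction C with
    | nil => simp [clauseFml, Fml.lits, Fml.litsP]
    | cons l C ih =>
      change x ∈ (litFml l).lits ∨ x ∈ (clauseFml C).lits ↔ _
      simp [lits_litFml, ih]
  induction F with
  | nil => simp [cformFml, Fml.lits, Fml.litsP]
  | cons C F ih =>
    change x ∈ (clauseFml C).lits ∨ x ∈ (cformFml F).lits ↔ _
    simp [hC, ih]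

theorem mem_lits_foldr_or (Hs : List Fml) (x : Lit) :
    x ∈ (Hs.foldr Fml.or Fml.fls).lits ↔ ∃ H ∈ Hs, x ∈ H.lits := by
  induction Hs with
  | nil => simp [Fml.lits, Fml.litsP]
  | cons H Hs ih => simp_all [Fml.lits, Fml.litsP]

theorem mem_lits_foldr_and (Hs : List Fml) (x : Lit) :
    x ∈ (Hs.foldr Fml.and Fml.tru).lits ↔ ∃ H ∈ Hs, x ∈ H.lits := by
  induction Hs with
  | nil => simp [Fml.lits, Fml.litsP]
  | cons H Hs ih => simp_all [Fml.lits, Fml.litsP]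

end Literals

section Ground

theorem Tm.applySub_of_vars_eq_nil (σ : ℕ → Tm) : (t : Tm) → t.vars = [] → t.applySub σ = t
  | .var x, h => by simp [Tm.vars] at h
  | .fn f ts, h => by
    rw [Tm.applySub]
    congr 1
    conv_rhs => rw [← List.attach_map_subtype_val ts]
    refine List.map_congr_left fun ⟨u, hu⟩ _ => Tm.applySub_of_vars_eq_nil σ u ?_
    rw [Tm.vars] at h
    exact List.flatten_eq_nil_iff.mp h _ (List.mem_map.mpr ⟨⟨u, hu⟩, List.mem_attach _ _, rfl⟩)
decreasing_by
  have := List.sizeOf_lt_of_mem hu; simp_wf; omega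

theorem litSub_of_litGround (σ : ℕ → Tm) {l : Lit} (hl : litGround l) : litSub σ l = l := by
  obtain ⟨b, p, ts⟩ := l
  simpa [litSub] using List.map_congr_left fun t ht => Tm.applySub_of_vars_eq_nil σ t (hl t ht)

theorem mem_of_instClause {F : CForm} (hF : cformGround F) {C D : Clause} (hD : D ∈ F)
    (h : instClause C D) : C ∈ F := by
  obtain ⟨σ, rfl⟩ := h
  rwa [List.map_congr_left fun l hl => litSub_of_litGround σ (hF D hD l hl), List.map_id']

end Ground

section Interpolants

variable {Fr Fb : CForm}

def BranchLitsIn (Fr Fb : CForm) (br : List (Lit × Bool)) : Prop :=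
  ∀ p ∈ br, p.1 ∈ (cformFml (if p.2 then Fr else Fb)).lits

def IsBranchInterpolant (Fr Fb : CForm) (br : List (Lit × Bool)) (H : Fml) : Prop :=
  Entails (.and (cformFml Fr) (branchFml true br)) H ∧
  Entails (.and (cformFml Fb) (branchFml false br)) (.neg H) ∧
  H.lits ⊆ (cformFml Fr).lits ∩ (Fml.neg (cformFml Fb)).lits

theorem IsBranchInterpolant.of_nil {H : Fml} (h : IsBranchInterpolant Fr Fb [] H) :
    (Entails (cformFml Fr) H ∧ Entails H (.neg (cformFml Fb))) ∧
      H.lits ⊆ (cformFml Fr).lits ∩ (Fml.neg (cformFml Fb)).lits :=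
  ⟨⟨fun D hD I a hFr => h.1 D hD I a ⟨hFr, trivial⟩,
    fun D hD I a hH hFb => h.2.1 D hD I a ⟨hFb, trivial⟩ hH⟩, h.2.2⟩

theorem isBranchInterpolant_fls {br : List (Lit × Bool)} {l : Lit} (hl : (l, true) ∈ br)
    (hl' : (litCompl l, true) ∈ br) : IsBranchInterpolant Fr Fb br .fls := by
  refine ⟨fun D _ I a ⟨_, h⟩ => ?_, fun _ _ _ _ _ h => h, by simp [Fml.lits, Fml.litsP]⟩
  exact (holds_litFml_litCompl l).mp (holds_litFml_of_mem_branchFml hl' h)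
    (holds_litFml_of_mem_branchFml hl h)

theorem isBranchInterpolant_tru {br : List (Lit × Bool)} {l : Lit} (hl : (l, false) ∈ br)
    (hl' : (litCompl l, false) ∈ br) : IsBranchInterpolant Fr Fb br .tru := by
  refine ⟨fun _ _ _ _ _ => trivial, fun D _ I a ⟨_, h⟩ _ => ?_, by simp [Fml.lits, Fml.litsP]⟩
  exact (holds_litFml_litCompl l).mp (holds_litFml_of_mem_branchFml hl' h)
    (holds_litFml_of_mem_branchFml hl h)

theorem isBranchInterpolant_litFml {br : List (Lit × Bool)} {l : Lit} (hl : (l, true) ∈ br)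
    (hl' : (litCompl l, false) ∈ br) (hbr : BranchLitsIn Fr Fb br) :
    IsBranchInterpolant Fr Fb br (litFml l) := by
  refine ⟨fun D _ I a ⟨_, h⟩ => holds_litFml_of_mem_branchFml hl h,
    fun D _ I a ⟨_, h⟩ => (holds_litFml_litCompl l).mp
      (holds_litFml_of_mem_branchFml hl' h), ?_⟩
  rw [lits_litFml, Set.singleton_subset_iff, Set.mem_inter_iff, mem_lits_neg]
  exact ⟨by simpa using hbr _ hl, by simpa using hbr _ hl'⟩

theorem isBranchInterpolant_leafIpol {br : List (Lit × Bool)} {l : Lit} {s ts : Bool}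
    (htgt : (litCompl l, ts) ∈ br) (hbr : BranchLitsIn Fr Fb ((l, s) :: br)) :
    IsBranchInterpolant Fr Fb ((l, s) :: br) (leafIpol s ts l) := by
  have hself : (l, s) ∈ (l, s) :: br := List.mem_cons_self
  have htgt : (litCompl l, ts) ∈ (l, s) :: br := List.mem_cons_of_mem _ htgt
  cases s <;> cases ts
  · exact isBranchInterpolant_tru hself htgt
  · exact isBranchInterpolant_litFml htgt (by rwa [litCompl_litCompl]) hbr
  · exact isBranchInterpolant_litFml hself htgt hbr
  · exact isBranchInterpolant_fls hself htgt

theorem IsBranchInterpolant.foldr_or {br : List (Lit × Bool)} {ps : List (Lit × Fml)}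
    (hC : ps.map Prod.fst ∈ Fr)
    (hps : ∀ p ∈ ps, IsBranchInterpolant Fr Fb ((p.1, true) :: br) p.2) :
    IsBranchInterpolant Fr Fb br ((ps.map Prod.snd).foldr .or .fls) := by
  refine ⟨fun D hD I a ⟨hFr, hbr⟩ => ?_, fun D hD I a ⟨hFb, hbr⟩ hH => ?_, fun x hx => ?_⟩
  · obtain ⟨_, hl, hlI⟩ := (holds_clauseFml _).mp ((holds_cformFml Fr).mp hFr _ hC)
    obtain ⟨p, hp, rfl⟩ := List.mem_map.mp hl
    rw [holds_foldr_or]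
    exact ⟨p.2, List.mem_map_of_mem hp,
      (hps p hp).1 D hD I a ⟨hFr, holds_branchFml_cons.mpr ⟨fun _ => hlI, hbr⟩⟩⟩
  · obtain ⟨_, hH, hHI⟩ := (holds_foldr_or _).mp hH
    obtain ⟨p, hp, rfl⟩ := List.mem_map.mp hH
    exact (hps p hp).2.1 D hD I a ⟨hFb, holds_branchFml_cons.mpr ⟨nofun, hbr⟩⟩ hHI
  · obtain ⟨_, hH, hx⟩ := (mem_lits_foldr_or _ x).mp hx
    obtain ⟨p, hp, rfl⟩ := List.mem_map.mp hH
    exact (hps p hp).2.2 hx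

theorem IsBranchInterpolant.foldr_and {br : List (Lit × Bool)} {ps : List (Lit × Fml)}
    (hC : ps.map Prod.fst ∈ Fb)
    (hps : ∀ p ∈ ps, IsBranchInterpolant Fr Fb ((p.1, false) :: br) p.2) :
    IsBranchInterpolant Fr Fb br ((ps.map Prod.snd).foldr .and .tru) := by
  refine ⟨fun D hD I a ⟨hFr, hbr⟩ => ?_, fun D hD I a ⟨hFb, hbr⟩ hH => ?_, fun x hx => ?_⟩
  · refine (holds_foldr_and _).mpr fun _ hH => ?_
    obtain ⟨p, hp, rfl⟩ := List.mem_map.mp hH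
    exact (hps p hp).1 D hD I a ⟨hFr, holds_branchFml_cons.mpr ⟨nofun, hbr⟩⟩
  · obtain ⟨_, hl, hlI⟩ := (holds_clauseFml _).mp ((holds_cformFml Fb).mp hFb _ hC)
    obtain ⟨p, hp, rfl⟩ := List.mem_map.mp hl
    exact (hps p hp).2.1 D hD I a
      ⟨hFb, holds_branchFml_cons.mpr ⟨fun _ => hlI, hbr⟩⟩
      ((holds_foldr_and _).mp hH p.2 (List.mem_map_of_mem hp))
  · obtain ⟨_, hH, hx⟩ := (mem_lits_foldr_and _ x).mp hx
    obtain ⟨p, hp, rfl⟩ := List.mem_map.mp hH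
    exact (hps p hp).2.2 hx

end Interpolants

section Tableaux

variable {Fr Fb : CForm}

theorem map_lit_mem_of_sides (hgFr : cformGround Fr) (hgFb : cformGround Fb) {cs : List Tab}
    {b : Bool} (hcl : cs = [] ∨ ∃ b : Bool, (∀ c ∈ cs, Tab.side c = b) ∧
      ∃ D ∈ (if b then Fr else Fb), instClause (cs.map Tab.lit) D)
    (hne : cs ≠ []) (hsides : ∀ c ∈ cs, Tab.side c = b) :
    cs.map Tab.lit ∈ (if b then Fr else Fb) := by
  obtain ⟨c, hc⟩ := List.exists_mem_of_ne_nil cs hne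
  obtain ⟨b', hb', D, hD, hinst⟩ := hcl.resolve_left hne
  obtain rfl : b' = b := (hb' c hc).symm.trans (hsides c hc)
  exact mem_of_instClause (by split <;> assumption) hD hinst

theorem exists_children_isBranchInterpolant (hgFr : cformGround Fr) (hgFb : cformGround Fb)
    {br : List (Lit × Bool)} {cs : List Tab} {Hs : List Fml} {b : Bool}
    (hcl : cs = [] ∨ ∃ b : Bool, (∀ c ∈ cs, Tab.side c = b) ∧
      ∃ D ∈ (if b then Fr else Fb), instClause (cs.map Tab.lit) D)
    (hne : cs ≠ []) (hsides : ∀ c ∈ cs, Tab.side c = b) (hlen : cs.length = Hs.length)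
    (hch : ∀ c ∈ cs, TwoTabFor Fr Fb c) (hbr : BranchLitsIn Fr Fb br)
    (ih : ∀ p ∈ cs.zip Hs, TwoTabFor Fr Fb p.1 →
      BranchLitsIn Fr Fb ((p.1.lit, p.1.side) :: br) →
      IsBranchInterpolant Fr Fb ((p.1.lit, p.1.side) :: br) p.2) :
    ∃ ps : List (Lit × Fml), ps.map Prod.snd = Hs ∧ ps.map Prod.fst ∈ (if b then Fr else Fb) ∧
      ∀ p ∈ ps, IsBranchInterpolant Fr Fb ((p.1, b) :: br) p.2 := by
  have hC := map_lit_mem_of_sides hgFr hgFb hcl hne hsides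
  refine ⟨(cs.zip Hs).map fun p => (p.1.lit, p.2), ?_, ?_, ?_⟩
  · rw [List.map_map]
    exact List.map_snd_zip hlen.ge
  · rw [← List.map_fst_zip hlen.le (l₂ := Hs)] at hC
    simpa [List.map_map, Function.comp_def] using hC
  · simp only [List.forall_mem_map]
    rintro ⟨c, H⟩ hp
    have hc := (List.of_mem_zip hp).1
    rw [← hsides c hc]
    refine ih _ hp (hch c hc) (List.forall_mem_cons.mpr ⟨?_, hbr⟩)
    rw [hsides c hc, mem_lits_cformFml]
    exact ⟨_, hC, List.mem_map_of_mem hc⟩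

theorem Ipol.isBranchInterpolant (hgFr : cformGround Fr) (hgFb : cformGround Fb)
    {br : List (Lit × Bool)} {t : Tab} {H : Fml} (h : Ipol br t H) (ht : TwoTabFor Fr Fb t)
    (hbr : BranchLitsIn Fr Fb ((t.lit, t.side) :: br)) :
    IsBranchInterpolant Fr Fb ((t.lit, t.side) :: br) H := by
  induction h with
  | leaf htgt => exact isBranchInterpolant_leafIpol htgt hbr
  | innerR hne hsides hlen _ ih =>
    obtain ⟨hcl, hch⟩ := ht
    obtain ⟨ps, rfl, hC, hps⟩ :=
      exists_children_isBranchInterpolant hgFr hgFb hcl hne hsides hlen hch hbr ih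
    exact IsBranchInterpolant.foldr_or (by simpa using hC) hps
  | innerB hne hsides hlen _ ih =>
    obtain ⟨hcl, hch⟩ := ht
    obtain ⟨ps, rfl, hC, hps⟩ :=
      exists_children_isBranchInterpolant hgFr hgFb hcl hne hsides hlen hch hbr ih
    exact IsBranchInterpolant.foldr_and (by simpa using hC) hps

end Tableaux

theorem ground_ipol_correct_general (Fr Fb : CForm) (T : List Tab)
    (hgFr : cformGround Fr) (hgFb : cformGround Fb)
    (htab : TwoTableauFor Fr Fb T) :
    ∀ H, IpolRoot T H →
      (Entails (cformFml Fr) H ∧ Entails H (.neg (cformFml Fb)))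
      ∧ Fml.lits H ⊆ Fml.lits (cformFml Fr) ∩ Fml.lits (.neg (cformFml Fb)) := by
  obtain ⟨hcl, hch⟩ := htab
  have hnil : BranchLitsIn Fr Fb [] := nofun
  rintro H (⟨hne, hsides, hlen, hzip⟩ | ⟨hne, hsides, hlen, hzip⟩)
  · obtain ⟨ps, rfl, hC, hps⟩ := exists_children_isBranchInterpolant hgFr hgFb hcl hne hsides
      hlen hch hnil fun p hp => (hzip p hp).isBranchInterpolant hgFr hgFb
    exact (IsBranchInterpolant.foldr_or (by simpa using hC) hps).of_nil
  · obtain ⟨ps, rfl, hC, hps⟩ := exists_children_isBranchInterpolant hgFr hgFb hcl hne hsides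
      hlen hch hnil fun p hp => (hzip p hp).isBranchInterpolant hgFr hgFb
    exact (IsBranchInterpolant.foldr_and (by simpa using hC) hps).of_nil

/-- correctness of ground interpolant extraction from a closed
two-sided clausal ground tableau, at the root. -/
theorem ground_ipol_correct (Fr Fb : CForm) (T : List Tab)
    (hgFr : cformGround Fr) (hgFb : cformGround Fb)
    (htab : TwoTableauFor Fr Fb T)
    (hgT : ∀ br t, OccIn T br t → litGround (Tab.lit t))
    (hclosed : ∀ t ∈ T, SClosedFrom [] t) :
    ∀ H, IpolRoot T H →
      (Entails (cformFml Fr) H ∧ Entails H (.neg (cformFml Fb)))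
      ∧ Fml.lits H ⊆ Fml.lits (cformFml Fr) ∩ Fml.lits (.neg (cformFml Fb)) :=
  ground_ipol_correct_general Fr Fb T hgFr hgFb htab

end CTI
end

section
/- Let F be an RQFO formula. Then for every structure M interpreting the predicates and constants of F (but not the definer predicates) and every assignment of values in M to the free variables of F: M satisfies F if and only if there exist interpretations of the definer predicates d_p for p ∈ pos(F) expanding M to a structure M′ such that M′ satisfies DEF(F) under the same assignment. Equivalently, F ≡ ∃d_{p₁} … ∃d_{pₙ} DEF(F), where p₁,…,pₙ are the positions of F and the second-order existential quantifiers are interpreted semantically via expansions of structures. -/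
namespace CTI

/-- A relational atom: predicate symbol with argument list. -/
abbrev Atom := ℕ × List Tm

/-- RQFO formulas: first-order formulas with relativized quantifiers.
`all vs R F` stands for ∀vs (¬R ∨ F) and `ex vs R F` for ∃vs (R ∧ F). -/
inductive RQ : Type where
  | tru : RQ
  | fls : RQ
  | and : RQ → RQ → RQ
  | or : RQ → RQ → RQ
  | all : List ℕ → Atom → RQ → RQ
  | ex : List ℕ → Atom → RQ → RQ

/-- Well-formedness of a relativized quantification: the atom is relational
(arguments are variables or constants) and all quantified variables occur in it. -/
def atomOK (vs : List ℕ) (R : Atom) : Prop :=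
  (∀ t ∈ R.2, (∃ x, t = Tm.var x) ∨ (∃ c, t = Tm.fn c [])) ∧
  ∀ v ∈ vs, Tm.var v ∈ R.2

/-- Well-formedness of RQFO formulas. -/
def RQ.wf : RQ → Prop
  | .tru => True
  | .fls => True
  | .and F G => F.wf ∧ G.wf
  | .or F G => F.wf ∧ G.wf
  | .all vs R F => atomOK vs R ∧ F.wf
  | .ex vs R F => atomOK vs R ∧ F.wf

/-- Universal quantification upon a list of variables. -/
def allN (xs : List ℕ) (F : Fml) : Fml := xs.foldr .all F

/-- Existential quantification upon a list of variables. -/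
def exN (xs : List ℕ) (F : Fml) : Fml := xs.foldr .ex F

/-- The first-order formula denoted by an RQFO formula. -/
def RQ.toFml : RQ → Fml
  | .tru => .tru
  | .fls => .fls
  | .and F G => .and F.toFml G.toFml
  | .or F G => .or F.toFml G.toFml
  | .all vs R F => allN vs (.or (.neg (.atom R.1 R.2)) F.toFml)
  | .ex vs R F => exN vs (.and (.atom R.1 R.2) F.toFml)

/-- The free variables of an RQFO formula. -/
def RQ.fv : RQ → Finset ℕ
  | .tru => ∅
  | .fls => ∅
  | .and F G => F.fv ∪ G.fv
  | .or F G => F.fv ∪ G.fv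
  | .all vs R F => ((R.2.map Tm.vars).flatten.toFinset ∪ F.fv) \ vs.toFinset
  | .ex vs R F => ((R.2.map Tm.vars).flatten.toFinset ∪ F.fv) \ vs.toFinset

/-- x̄: the free variables of an RQFO formula in the standard order. -/
def xbar (X : RQ) : List ℕ := X.fv.sort (· ≤ ·)

/-- The positions of an RQFO formula (relativizing atoms counted as part of
their quantification). -/
def RQ.posL : RQ → List (List ℕ)
  | .tru => [[]]
  | .fls => [[]]
  | .and F G => [] :: (F.posL.map (fun q => 1 :: q) ++ G.posL.map (fun q => 2 :: q))
  | .or F G => [] :: (F.posL.map (fun q => 1 :: q) ++ G.posL.map (fun q => 2 :: q))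
  | .all _ _ F => [] :: F.posL.map (fun q => 1 :: q)
  | .ex _ _ F => [] :: F.posL.map (fun q => 1 :: q)

/-- D_p: the definer atom for position `p` and subformula `X`, with the
definer predicate `d p` applied to the free variables of `X`. -/
def Dat (d : List ℕ → ℕ) (p : List ℕ) (X : RQ) : Fml :=
  .atom (d p) ((xbar X).map .var)

/-- Implication, encoded. -/
def impF (A B : Fml) : Fml := .or (.neg A) B

/-- The conjunction of the formulas def_q for all positions `q` of the given
RQFO formula, which is located at absolute position `p`. -/
def RQ.defs (d : List ℕ → ℕ) : RQ → List ℕ → Fml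
  | .tru, p => impF (Dat d p .tru) .tru
  | .fls, p => impF (Dat d p .fls) .fls
  | .and F G, p =>
      .and (allN (xbar (.and F G))
        (impF (Dat d p (.and F G)) (.and (Dat d (p ++ [1]) F) (Dat d (p ++ [2]) G))))
      (.and (RQ.defs d F (p ++ [1])) (RQ.defs d G (p ++ [2])))
  | .or F G, p =>
      .and (allN (xbar (.or F G))
        (impF (Dat d p (.or F G)) (.or (Dat d (p ++ [1]) F) (Dat d (p ++ [2]) G))))
      (.and (RQ.defs d F (p ++ [1])) (RQ.defs d G (p ++ [2])))
  | .all vs R F, p =>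
      .and (allN (xbar (.all vs R F))
        (impF (Dat d p (.all vs R F))
          (allN vs (.or (.neg (.atom R.1 R.2)) (Dat d (p ++ [1]) F)))))
      (RQ.defs d F (p ++ [1]))
  | .ex vs R F, p =>
      .and (allN (xbar (.ex vs R F))
        (impF (Dat d p (.ex vs R F))
          (exN vs (.and (.atom R.1 R.2) (Dat d (p ++ [1]) F)))))
      (RQ.defs d F (p ++ [1]))

/-- DEF(F): the definitional (structure-preserving) form of an RQFO formula,
with definer predicates given by `d`. -/
def DEF (d : List ℕ → ℕ) (F : RQ) : Fml := .and (Dat d [] F) (RQ.defs d F [])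

/-- Negation of an RQFO formula, with negation propagated inward. -/
def RQ.negR : RQ → RQ
  | .tru => .fls
  | .fls => .tru
  | .and F G => .or F.negR G.negR
  | .or F G => .and F.negR G.negR
  | .all vs R F => .ex vs R F.negR
  | .ex vs R F => .all vs R F.negR

/-- `I` and `I'` agree on all function symbols outside `Sf` and all predicate
symbols outside `Sp`. -/
def AgreeExcept {D : Type} (Sf Sp : Set ℕ) (I I' : Interp D) : Prop :=
  (∀ f, f ∉ Sf → I.fn f = I'.fn f) ∧ (∀ p, p ∉ Sp → I.pr p = I'.pr p)

end CTI

namespace CTI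

/-!
Expand a structure by interpreting each definer `d_p` as the extension of `F|p` over `x̄_p`.
The body of `def_p` is the outermost connective of `F|p` applied to the definer atoms of the
children of `p`, so `def_p` holds in the expansion once the children's definers are exact.
Conversely, every connective and relativized quantifier is monotone in its subformulas, so in
any model of `DEF(F)` induction on subformulas gives `D_p → F|p`, and `p = ε` yields `F`.
Since the definers are fresh, changing them does not affect the truth of `F` or its subformulas.
-/

lemma Tm.eval_congr {D : Type} {I J : Interp D} (hfn : I.fn = J.fn) {a b : ℕ → D} :
    ∀ t : Tm, (∀ x ∈ t.vars, a x = b x) → t.eval I a = t.eval J b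
  | .var x, h => by simpa [Tm.eval] using h x (by simp [Tm.vars])
  | .fn f ts, h => by
    simp only [Tm.eval, hfn]
    congr 1
    refine List.map_congr_left fun ⟨t, ht⟩ _ => Tm.eval_congr hfn t fun x hx => h x ?_
    simp only [Tm.vars, List.mem_flatten, List.mem_map]
    exact ⟨t.vars, ⟨⟨t, ht⟩, List.mem_attach _ _, rfl⟩, hx⟩
decreasing_by
  have := List.sizeOf_lt_of_mem ht; simp_wf; omega

lemma Fml.holds_congr_of_litsP {D : Type} {I J : Interp D} (hfn : I.fn = J.fn) (G : Fml) :
    ∀ pol, (∀ b s ts, (b, s, ts) ∈ G.litsP pol → I.pr s = J.pr s) →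
      ∀ a, (G.holds I a ↔ G.holds J a) := by
  induction G with
  | tru | fls => intro _ _ _; exact Iff.rfl
  | atom p ts =>
    intro pol h a
    have heval : ts.map (Tm.eval I a) = ts.map (Tm.eval J a) :=
      List.map_congr_left fun t _ => Tm.eval_congr hfn t fun _ _ => rfl
    simp only [Fml.holds, h pol p ts rfl, heval]
  | neg G ih => exact fun pol h a => not_congr (ih (!pol) h a)
  | and G H ihG ihH =>
    exact fun pol h a => and_congr (ihG pol (fun b s ts m => h b s ts (Or.inl m)) a)
      (ihH pol (fun b s ts m => h b s ts (Or.inr m)) a)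
  | or G H ihG ihH =>
    exact fun pol h a => or_congr (ihG pol (fun b s ts m => h b s ts (Or.inl m)) a)
      (ihH pol (fun b s ts m => h b s ts (Or.inr m)) a)
  | all x G ih => exact fun pol h a => forall_congr' fun _ => ih pol h _
  | ex x G ih => exact fun pol h a => exists_congr fun _ => ih pol h _

lemma Fml.holds_congr {D : Type} {I J : Interp D} (hfn : I.fn = J.fn) {G : Fml}
    (hpr : ∀ s ∈ G.predSyms, I.pr s = J.pr s) (a : ℕ → D) : G.holds I a ↔ G.holds J a :=
  G.holds_congr_of_litsP hfn true (fun b s ts m => hpr s ⟨b, ts, m⟩) a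

lemma eqOn_update {α β : Type*} [DecidableEq α] {s : Set α} {a b : α → β} {x : α}
    (h : Set.EqOn a b (s \ {x})) (v : β) :
    Set.EqOn (Function.update a x v) (Function.update b x v) s := by
  intro y hy
  by_cases hyx : y = x
  · simp [hyx]
  · simp only [Function.update_apply, if_neg hyx]
    exact h ⟨hy, hyx⟩

lemma Fml.holds_iff_of_eqOn_fv {D : Type} (I : Interp D) (G : Fml) :
    ∀ {a b : ℕ → D}, Set.EqOn a b G.fv → (G.holds I a ↔ G.holds I b) := by
  induction G with
  | tru | fls => intro _ _ _; exact Iff.rfl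
  | atom p ts =>
    intro a b h
    have heval : ts.map (Tm.eval I a) = ts.map (Tm.eval I b) :=
      List.map_congr_left fun t ht => Tm.eval_congr rfl t fun x hx => h ⟨t, ht, hx⟩
    simp only [Fml.holds, heval]
  | neg G ih => exact fun h => not_congr (ih h)
  | and G H ihG ihH =>
    exact fun h => and_congr (ihG (h.mono Set.subset_union_left))
      (ihH (h.mono Set.subset_union_right))
  | or G H ihG ihH =>
    exact fun h => or_congr (ihG (h.mono Set.subset_union_left))
      (ihH (h.mono Set.subset_union_right))
  | all x G ih => exact fun h => forall_congr' fun v => ih (eqOn_update h v)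
  | ex x G ih => exact fun h => exists_congr fun v => ih (eqOn_update h v)

section Blocks

variable {D : Type} (I : Interp D)

lemma holds_allN (xs : List ℕ) (G : Fml) :
    ∀ a : ℕ → D, (allN xs G).holds I a ↔
      ∀ b : ℕ → D, (∀ y ∉ xs, b y = a y) → G.holds I b := by
  induction xs with
  | nil =>
    intro a
    refine ⟨fun h b hb => ?_, fun h => h a fun _ _ => rfl⟩
    rwa [funext fun y => hb y List.not_mem_nil]
  | cons x xs ih =>
    intro a
    simp only [allN, List.foldr_cons, Fml.holds] at ih ⊢
    constructor
    · intro h b hb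
      refine (ih _).mp (h (b x)) b fun y hy => ?_
      by_cases hyx : y = x
      · simp [hyx]
      · simpa [hyx] using hb y (by simp [hy, hyx])
    · intro h v
      refine (ih _).mpr fun b hb => h b fun y hy => ?_
      have hyx : y ≠ x := fun e => hy (by simp [e])
      simpa [hyx] using hb y fun hyxs => hy (by simp [hyxs])

lemma holds_exN (xs : List ℕ) (G : Fml) :
    ∀ a : ℕ → D, (exN xs G).holds I a ↔
      ∃ b : ℕ → D, (∀ y ∉ xs, b y = a y) ∧ G.holds I b := by
  induction xs with
  | nil =>
    intro a
    refine ⟨fun h => ⟨a, fun _ _ => rfl, h⟩, fun ⟨b, hb, h⟩ => ?_⟩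
    rwa [funext fun y => hb y List.not_mem_nil] at h
  | cons x xs ih =>
    intro a
    simp only [exN, List.foldr_cons, Fml.holds] at ih ⊢
    constructor
    · rintro ⟨v, h⟩
      obtain ⟨b, hb, hG⟩ := (ih _).mp h
      refine ⟨b, fun y hy => ?_, hG⟩
      have hyx : y ≠ x := fun e => hy (by simp [e])
      simpa [hyx] using hb y fun hyxs => hy (by simp [hyxs])
    · rintro ⟨b, hb, hG⟩
      refine ⟨b x, (ih _).mpr ⟨b, fun y hy => ?_, hG⟩⟩
      by_cases hyx : y = x
      · simp [hyx]
      · simpa [hyx] using hb y (by simp [hy, hyx])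

lemma fv_allN (xs : List ℕ) (G : Fml) : (allN xs G).fv = G.fv \ {y | y ∈ xs} := by
  induction xs with
  | nil => simp [allN]
  | cons x xs ih =>
    simp only [allN, List.foldr_cons, Fml.fv] at ih ⊢
    rw [ih]; ext y
    simp only [Set.mem_sdiff, Set.mem_ofPred_eq, Set.mem_singleton_iff, List.mem_cons, not_or]
    tauto

lemma fv_exN (xs : List ℕ) (G : Fml) : (exN xs G).fv = G.fv \ {y | y ∈ xs} := by
  induction xs with
  | nil => simp [exN]
  | cons x xs ih =>
    simp only [exN, List.foldr_cons, Fml.fv] at ih ⊢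
    rw [ih]; ext y
    simp only [Set.mem_sdiff, Set.mem_ofPred_eq, Set.mem_singleton_iff, List.mem_cons, not_or]
    tauto

lemma litsP_allN (xs : List ℕ) (G : Fml) (pol : Bool) : (allN xs G).litsP pol = G.litsP pol := by
  induction xs with
  | nil => rfl
  | cons x xs ih => exact ih

lemma litsP_exN (xs : List ℕ) (G : Fml) (pol : Bool) : (exN xs G).litsP pol = G.litsP pol := by
  induction xs with
  | nil => rfl
  | cons x xs ih => exact ih

lemma holds_allN_iff_forall {xs : List ℕ} {G : Fml} (h : G.fv ⊆ {y | y ∈ xs}) (a : ℕ → D) :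
    (allN xs G).holds I a ↔ ∀ b, G.holds I b := by
  classical
  refine ⟨fun hG b => ?_, fun hG => (holds_allN I xs G a).mpr fun b _ => hG b⟩
  let b' : ℕ → D := fun y => if y ∈ xs then b y else a y
  have hb' : G.holds I b' := (holds_allN I xs G a).mp hG b' fun y hy => if_neg hy
  exact (G.holds_iff_of_eqOn_fv I fun y hy => if_pos (h hy)).mp hb'

end Blocks

namespace RQ

def children : RQ → List (ℕ × RQ)
  | .tru | .fls => []
  | .and F G | .or F G => [(1, F), (2, G)]
  | .all _ _ F | .ex _ _ F => [(1, F)]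

theorem children_induction {P : RQ → Prop} (step : ∀ X, (∀ c ∈ X.children, P c.2) → P X) :
    ∀ X, P X := by
  intro X
  induction X <;> exact step _ (by simp_all [children])

lemma eq_of_mem_children {X Y Z : RQ} {i : ℕ} (hY : (i, Y) ∈ X.children)
    (hZ : (i, Z) ∈ X.children) : Y = Z := by
  cases X <;> simp only [children, List.mem_cons, Prod.mk.injEq, List.not_mem_nil] at hY hZ <;>
    grind

/-- `SubAt X q Y`: `Y` is the subformula of `X` at position `q`. -/
inductive SubAt : RQ → List ℕ → RQ → Prop
  | refl (X : RQ) : SubAt X [] X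
  | child {X Y Z : RQ} {i : ℕ} {q : List ℕ} :
      (i, Y) ∈ X.children → SubAt Y q Z → SubAt X (i :: q) Z

lemma SubAt.snoc {X Y Z : RQ} {q : List ℕ} {i : ℕ} (h : X.SubAt q Y)
    (hc : (i, Z) ∈ Y.children) : X.SubAt (q ++ [i]) Z := by
  induction h with
  | refl => exact .child hc (.refl Z)
  | child hY _ ih => exact .child hY (ih hc)

lemma SubAt.unique {X Y Z : RQ} {q : List ℕ} (hY : X.SubAt q Y) (hZ : X.SubAt q Z) : Y = Z := by
  induction hY generalizing Z with
  | refl => cases hZ; rfl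
  | child hc _ ih =>
    obtain _ | ⟨hc', h'⟩ := hZ
    exact ih (eq_of_mem_children hc' hc ▸ h')

lemma cons_mem_posL {X Y : RQ} {i : ℕ} {q : List ℕ} (hc : (i, Y) ∈ X.children)
    (hq : q ∈ Y.posL) : i :: q ∈ X.posL := by
  cases X <;> simp only [children, List.mem_cons, Prod.mk.injEq, List.not_mem_nil] at hc <;>
    aesop (add norm posL)

lemma SubAt.mem_posL {X Y : RQ} {q : List ℕ} (h : X.SubAt q Y) : q ∈ X.posL := by
  induction h with
  | refl X => cases X <;> simp [posL]
  | child hc _ ih => exact cons_mem_posL hc ih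

/-- The outermost connective of `X` (with its relativizing atom) applied to `f i Y` for
each child `(i, Y)` of `X`. -/
def replaceChildren (f : ℕ → RQ → Fml) : RQ → Fml
  | .tru => .tru
  | .fls => .fls
  | .and F G => .and (f 1 F) (f 2 G)
  | .or F G => .or (f 1 F) (f 2 G)
  | .all vs R F => allN vs (.or (.neg (.atom R.1 R.2)) (f 1 F))
  | .ex vs R F => exN vs (.and (.atom R.1 R.2) (f 1 F))

lemma toFml_eq_replaceChildren (X : RQ) : X.toFml = X.replaceChildren fun _ Y => Y.toFml := by
  cases X <;> rfl

lemma fv_replaceChildren_subset {f : ℕ → RQ → Fml} {X : RQ}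
    (hf : ∀ c ∈ X.children, (f c.1 c.2).fv ⊆ c.2.fv) : (X.replaceChildren f).fv ⊆ X.fv := by
  cases X with
  | tru | fls => simp [replaceChildren, Fml.fv]
  | and F G | or F G =>
    simp only [children, List.mem_cons, forall_eq_or_imp, List.not_mem_nil,
      IsEmpty.forall_iff, implies_true, and_true] at hf
    simp only [replaceChildren, Fml.fv, RQ.fv, Finset.coe_union]
    exact Set.union_subset_union hf.1 hf.2
  | all vs R F | ex vs R F =>
    simp only [children, List.mem_singleton, forall_eq] at hf
    simp only [replaceChildren, fv_allN, fv_exN, Fml.fv, RQ.fv, Finset.coe_sdiff,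
      Finset.coe_union, List.coe_toFinset]
    refine Set.sdiff_subset_sdiff_left (Set.union_subset_union (fun x ⟨t, ht, hx⟩ => ?_) hf)
    exact List.mem_flatten.mpr ⟨t.vars, List.mem_map_of_mem ht, hx⟩

lemma fv_toFml_subset (X : RQ) : X.toFml.fv ⊆ X.fv := by
  induction X using children_induction with
  | step X ih =>
    rw [toFml_eq_replaceChildren]
    exact fv_replaceChildren_subset ih

lemma holds_replaceChildren_mono {D : Type} {J : Interp D} {f g : ℕ → RQ → Fml} {X : RQ}
    (h : ∀ c ∈ X.children, ∀ b, (f c.1 c.2).holds J b → (g c.1 c.2).holds J b) {a : ℕ → D} :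
    (X.replaceChildren f).holds J a → (X.replaceChildren g).holds J a := by
  cases X with
  | tru | fls => exact id
  | and F G =>
    exact And.imp (h (1, F) (by simp [children]) a) (h (2, G) (by simp [children]) a)
  | or F G =>
    exact Or.imp (h (1, F) (by simp [children]) a) (h (2, G) (by simp [children]) a)
  | all vs R F =>
    simp only [replaceChildren, holds_allN]
    exact fun hf b hb => (hf b hb).imp_right (h (1, F) (by simp [children]) b)
  | ex vs R F =>
    simp only [replaceChildren, holds_exN]
    exact fun ⟨b, hb, hf⟩ => ⟨b, hb, hf.imp_right (h (1, F) (by simp [children]) b)⟩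

lemma lits_toFml_subset_of_mem_children {X Y : RQ} {i : ℕ} (hc : (i, Y) ∈ X.children) :
    Y.toFml.lits ⊆ X.toFml.lits := by
  cases X with
  | tru | fls => simp [children] at hc
  | and F G | or F G =>
    simp only [children, List.mem_cons, Prod.mk.injEq, List.not_mem_nil, or_false] at hc
    rcases hc with ⟨-, rfl⟩ | ⟨-, rfl⟩ <;> simp [toFml, Fml.lits, Fml.litsP]
  | all vs R F | ex vs R F =>
    obtain ⟨-, rfl⟩ : i = 1 ∧ Y = F := by simpa [children] using hc
    simp [toFml, Fml.lits, Fml.litsP, litsP_allN, litsP_exN]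

lemma SubAt.predSyms_subset {X Y : RQ} {q : List ℕ} (h : X.SubAt q Y) :
    Y.toFml.predSyms ⊆ X.toFml.predSyms := by
  induction h with
  | refl => exact le_rfl
  | child hc _ ih =>
    intro s hs
    obtain ⟨b, ts, hs⟩ := ih hs
    exact ⟨b, ts, lits_toFml_subset_of_mem_children hc hs⟩

end RQ

/-- `def_p` for the subformula `X` at position `p`. -/
def defAt (d : List ℕ → ℕ) (p : List ℕ) (X : RQ) : Fml :=
  allN (xbar X) (impF (Dat d p X) (X.replaceChildren fun i Y => Dat d (p ++ [i]) Y))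

section DefinitionalForm

variable {D : Type} {J : Interp D} {d : List ℕ → ℕ}

lemma holds_defs_iff {X : RQ} {p : List ℕ} {a : ℕ → D} :
    (X.defs d p).holds J a ↔
      (defAt d p X).holds J a ∧ ∀ c ∈ X.children, (c.2.defs d (p ++ [c.1])).holds J a := by
  have htru : xbar .tru = [] := by simp [xbar, RQ.fv]
  have hfls : xbar .fls = [] := by simp [xbar, RQ.fv]
  cases X <;> simp [RQ.defs, defAt, RQ.children, RQ.replaceChildren, Fml.holds, htru, hfls, allN]

lemma holds_defs_iff_forall_defAt {X : RQ} {p : List ℕ} {a : ℕ → D} :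
    (X.defs d p).holds J a ↔ ∀ q Y, X.SubAt q Y → (defAt d (p ++ q) Y).holds J a := by
  induction X using RQ.children_induction generalizing p with
  | step X ih =>
    rw [holds_defs_iff]
    constructor
    · rintro ⟨hX, hch⟩ q Y (_ | ⟨hc, hY⟩)
      · simpa using hX
      · simpa using (ih _ hc).mp (hch _ hc) _ _ hY
    · intro h
      refine ⟨by simpa using h [] X (.refl X), fun c hc => (ih c hc).mpr fun q Y hY => ?_⟩
      simpa using h _ _ (.child hc hY)

lemma holds_DEF_iff {F : RQ} {a : ℕ → D} :
    (DEF d F).holds J a ↔ (Dat d [] F).holds J a ∧ ∀ q Y, F.SubAt q Y → (defAt d q Y).holds J a := by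
  simp only [DEF, Fml.holds, holds_defs_iff_forall_defAt, List.nil_append]

lemma mem_xbar {X : RQ} {x : ℕ} : x ∈ xbar X ↔ x ∈ X.fv := Finset.mem_sort _

lemma holds_Dat {p : List ℕ} {X : RQ} {b : ℕ → D} :
    (Dat d p X).holds J b ↔ J.pr (d p) ((xbar X).map b) := by
  simp [Dat, Fml.holds, Function.comp_def, Tm.eval]

lemma fv_Dat (p : List ℕ) (X : RQ) : (Dat d p X).fv = X.fv := by
  ext x
  simp [Dat, Fml.fv, Tm.vars, mem_xbar]

lemma holds_defAt_iff {p : List ℕ} {X : RQ} {a : ℕ → D} :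
    (defAt d p X).holds J a ↔ ∀ b, (Dat d p X).holds J b →
      (X.replaceChildren fun i Y => Dat d (p ++ [i]) Y).holds J b := by
  have hfv : (impF (Dat d p X) (X.replaceChildren fun i Y => Dat d (p ++ [i]) Y)).fv ⊆
      {y | y ∈ xbar X} := by
    intro y hy
    show y ∈ xbar X
    rw [mem_xbar]
    simp only [impF, Fml.fv, fv_Dat] at hy
    exact hy.elim id fun hy => RQ.fv_replaceChildren_subset (fun c _ => (fv_Dat _ _).le) hy
  rw [defAt, holds_allN_iff_forall J hfv]
  simp only [impF, Fml.holds, imp_iff_not_or]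

end DefinitionalForm

section Semantics

variable {D : Type} {d : List ℕ → ℕ} {F : RQ}

lemma holds_of_holds_Dat {J : Interp D} {a : ℕ → D}
    (hdef : ∀ q Y, F.SubAt q Y → (defAt d q Y).holds J a) :
    ∀ Y q, F.SubAt q Y → ∀ b, (Dat d q Y).holds J b → Y.toFml.holds J b := by
  intro Y
  induction Y using RQ.children_induction with
  | step Y ih =>
    intro q hY b hb
    have hbody := holds_defAt_iff.mp (hdef q Y hY) b hb
    rw [RQ.toFml_eq_replaceChildren]
    exact RQ.holds_replaceChildren_mono (fun c hc => ih c hc _ (hY.snoc hc)) hbody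

lemma holds_defAt_of_forall_iff {J : Interp D}
    (hexact : ∀ q Y, F.SubAt q Y → ∀ b, (Dat d q Y).holds J b ↔ Y.toFml.holds J b)
    {q : List ℕ} {Y : RQ} (hY : F.SubAt q Y) (a : ℕ → D) : (defAt d q Y).holds J a := by
  refine holds_defAt_iff.mpr fun b hb => ?_
  have hYb := (hexact q Y hY b).mp hb
  rw [RQ.toFml_eq_replaceChildren] at hYb
  exact RQ.holds_replaceChildren_mono (fun c hc b => (hexact _ _ (hY.snoc hc) b).mpr) hYb

/-- The definer `d p` is interpreted by the extension of the subformula at `p`; stating this as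
an existential over positions avoids choosing `p` from `d p`. -/
def RQ.definerExpansion (F : RQ) (d : List ℕ → ℕ) (I : Interp D) : Interp D where
  fn := I.fn
  pr s args :=
    (∃ p Y, F.SubAt p Y ∧ d p = s ∧ ∃ b, (xbar Y).map b = args ∧ Y.toFml.holds I b) ∨
      ((∀ p ∈ F.posL, d p ≠ s) ∧ I.pr s args)

variable {I : Interp D}

lemma RQ.definerExpansion_pr_of_forall_ne {s : ℕ} (h : ∀ p ∈ F.posL, d p ≠ s) :
    (F.definerExpansion d I).pr s = I.pr s := by
  funext args
  refine propext ⟨?_, fun hI => .inr ⟨h, hI⟩⟩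
  rintro (⟨p, Y, hY, hs, -⟩ | ⟨-, hI⟩)
  · exact (h p hY.mem_posL hs).elim
  · exact hI

lemma RQ.agreeExcept_definerExpansion :
    AgreeExcept ∅ {s | ∃ p ∈ F.posL, s = d p} I (F.definerExpansion d I) :=
  ⟨fun _ _ => rfl, fun _ hs =>
    (definerExpansion_pr_of_forall_ne fun p hp hps => hs ⟨p, hp, hps.symm⟩).symm⟩

lemma holds_iff_of_agreeExcept (hfresh : ∀ p ∈ F.posL, d p ∉ F.toFml.predSyms) {J : Interp D}
    (hJ : AgreeExcept ∅ {s | ∃ p ∈ F.posL, s = d p} I J) {q : List ℕ} {Y : RQ}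
    (hY : F.SubAt q Y) (b : ℕ → D) : Y.toFml.holds J b ↔ Y.toFml.holds I b := by
  refine (Fml.holds_congr (funext fun f => hJ.1 f (Set.notMem_empty f)) (fun s hs => ?_) b).symm
  refine hJ.2 s ?_
  rintro ⟨p, hp, rfl⟩
  exact hfresh p hp (hY.predSyms_subset hs)

lemma holds_Dat_definerExpansion (hinj : ∀ p ∈ F.posL, ∀ q ∈ F.posL, d p = d q → p = q)
    {p : List ℕ} {Y : RQ} (hY : F.SubAt p Y) (b : ℕ → D) :
    (Dat d p Y).holds (F.definerExpansion d I) b ↔ Y.toFml.holds I b := by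
  rw [holds_Dat]
  refine ⟨?_, fun h => .inl ⟨p, Y, hY, rfl, b, rfl, h⟩⟩
  rintro (⟨p', Y', hY', hp, c, hc, hYc⟩ | ⟨hne, -⟩)
  · obtain rfl := hinj p' hY'.mem_posL p hY.mem_posL hp
    obtain rfl := hY'.unique hY
    refine (Y'.toFml.holds_iff_of_eqOn_fv I fun x hx => ?_).mp hYc
    exact List.map_inj_left.mp hc x (mem_xbar.mpr (Y'.fv_toFml_subset hx))
  · exact (hne p hY.mem_posL rfl).elim

end Semantics

theorem def_form_equivalence_general (F : RQ) (d : List ℕ → ℕ)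
    (hinj : ∀ p ∈ F.posL, ∀ q ∈ F.posL, d p = d q → p = q)
    (hfresh : ∀ p ∈ F.posL, d p ∉ (RQ.toFml F).predSyms)
    (D : Type) (I : Interp D) (a : ℕ → D) :
    (RQ.toFml F).holds I a ↔
      ∃ I' : Interp D,
        AgreeExcept ∅ {q | ∃ p ∈ F.posL, q = d p} I I' ∧ (DEF d F).holds I' a := by
  constructor
  · intro hF
    have hexact : ∀ q Y, F.SubAt q Y → ∀ b,
        (Dat d q Y).holds (F.definerExpansion d I) b ↔ Y.toFml.holds (F.definerExpansion d I) b :=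
      fun q Y hY b => (holds_Dat_definerExpansion hinj hY b).trans
        (holds_iff_of_agreeExcept hfresh RQ.agreeExcept_definerExpansion hY b).symm
    refine ⟨F.definerExpansion d I, RQ.agreeExcept_definerExpansion, holds_DEF_iff.mpr ⟨?_, ?_⟩⟩
    · exact (holds_Dat_definerExpansion hinj (.refl F) a).mpr hF
    · exact fun q Y hY => holds_defAt_of_forall_iff hexact hY a
  · rintro ⟨J, hJ, hDEF⟩
    obtain ⟨hroot, hdef⟩ := holds_DEF_iff.mp hDEF
    exact (holds_iff_of_agreeExcept hfresh hJ (.refl F) a).mp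
      (holds_of_holds_Dat hdef F [] (.refl F) a hroot)

/-- Semantic property of the definitional form of an RQFO
formula: F ≡ ∃d_{p₁} … ∃d_{pₙ} DEF(F). -/
theorem def_form_equivalence (F : RQ) (hwf : F.wf) (d : List ℕ → ℕ)
    (hinj : ∀ p ∈ F.posL, ∀ q ∈ F.posL, d p = d q → p = q)
    (hfresh : ∀ p ∈ F.posL, d p ∉ (RQ.toFml F).predSyms)
    (D : Type) (hD : Nonempty D) (I : Interp D) (a : ℕ → D) :
    (RQ.toFml F).holds I a ↔
      ∃ I' : Interp D,
        AgreeExcept ∅ {q | ∃ p ∈ F.posL, q = d p} I I' ∧ (DEF d F).holds I' a :=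
  def_form_equivalence_general F d hinj hfresh D I a

end CTI
end
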